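/- Let (δ_n) and (γ_n) be sequences of nonzero complex numbers and let k ≥ 1 be fixed. Suppose for each n, δ_n^k + a_{1,n} δ_n^{k−1} + ⋯ + a_{k−1,n} δ_n + a_{k,n} = 0, where each coefficient satisfies a_{j,n} = Σ_{l=0}^{j} b_{j,l,n} c_{j,l,n} with b_{j,l,n} = O(γ_n^l) and c_{j,l,n} = o(δ_n^{j−l}) as n → ∞. Then δ_n = O(γ_n) as n → ∞. -/
import Mathlib


open Filter Asymptotics

/-- If nonzero δ_n satisfy a monic polynomial equation of degree k whose coefficients
a_{j,n} are sums of products O(γ_n^l)·o(δ_n^{j−l}), then δ_n = O(γ_n). -/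
theorem stmt_6 (k : ℕ) (hk : 1 ≤ k) (δ γ : ℕ → ℂ)
    (hδ : ∀ n, δ n ≠ 0) (hγ : ∀ n, γ n ≠ 0)
    (a : ℕ → ℕ → ℂ) (b c : ℕ → ℕ → ℕ → ℂ)
    (hb : ∀ j l : ℕ, l ≤ j → (fun n => b j l n) =O[atTop] (fun n => γ n ^ l))
    (hc : ∀ j l : ℕ, l ≤ j → (fun n => c j l n) =o[atTop] (fun n => δ n ^ (j - l)))
    (ha : ∀ j : ℕ, 1 ≤ j → j ≤ k → ∀ n, a j n = ∑ l ∈ Finset.range (j + 1), b j l n * c j l n)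
    (hpoly : ∀ n, δ n ^ k + ∑ j ∈ Finset.Icc 1 k, a j n * δ n ^ (k - j) = 0) :
    δ =O[atTop] γ := by
  have hεpos : (0:ℝ) < 1 / (2 * ((k+1)^2 : ℝ)) := by positivity
  set ε : ℝ := 1 / (2 * ((k+1)^2 : ℝ)) with hεdef
  have hev : ∀ᶠ n in atTop, ∀ j ∈ Finset.Icc 1 k, ∀ l ∈ Finset.range (j+1),
      ‖b j l n * c j l n‖ ≤ ε * (‖γ n‖^l * ‖δ n‖^(j-l)) := by
    rw [Filter.eventually_all_finset]
    intro j _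
    rw [Filter.eventually_all_finset]
    intro l hl
    have hlj : l ≤ j := Finset.mem_range_succ_iff.mp hl
    have h := ((hb j l hlj).mul_isLittleO (hc j l hlj)).def hεpos
    filter_upwards [h] with n hn
    simpa [norm_mul, norm_pow] using hn
  rw [Asymptotics.isBigO_iff]
  refine ⟨1, ?_⟩
  filter_upwards [hev] with n hn
  rw [one_mul]
  by_contra hlt
  push_neg at hlt
  have hγδ : ‖γ n‖ ≤ ‖δ n‖ := le_of_lt hlt
  have hδpos : 0 < ‖δ n‖ := norm_pos_iff.mpr (hδ n)
  have haj : ∀ j ∈ Finset.Icc 1 k, ‖a j n‖ ≤ ((j:ℝ)+1) * ε * ‖δ n‖ ^ j := by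
    intro j hj
    obtain ⟨hj1, hjk⟩ := Finset.mem_Icc.mp hj
    rw [ha j hj1 hjk n]
    calc ‖∑ l ∈ Finset.range (j+1), b j l n * c j l n‖
        ≤ ∑ l ∈ Finset.range (j+1), ‖b j l n * c j l n‖ := norm_sum_le _ _
      _ ≤ ∑ _l ∈ Finset.range (j+1), ε * ‖δ n‖ ^ j := by
          apply Finset.sum_le_sum
          intro l hl
          have hlj : l ≤ j := Finset.mem_range_succ_iff.mp hl
          calc ‖b j l n * c j l n‖ ≤ ε * (‖γ n‖^l * ‖δ n‖^(j-l)) := hn j hj l hl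
            _ ≤ ε * (‖δ n‖^l * ‖δ n‖^(j-l)) := by
                gcongr
            _ = ε * ‖δ n‖ ^ j := by rw [← pow_add, Nat.add_sub_cancel' hlj]
      _ = ((j:ℝ)+1) * ε * ‖δ n‖ ^ j := by
          rw [Finset.sum_const, Finset.card_range]
          push_cast; ring
  have hmain : ‖δ n‖ ^ k ≤ ∑ j ∈ Finset.Icc 1 k, ‖a j n‖ * ‖δ n‖ ^ (k - j) := by
    have heq : δ n ^ k = -∑ j ∈ Finset.Icc 1 k, a j n * δ n ^ (k - j) := by
      linear_combination hpoly n
    calc ‖δ n‖ ^ k = ‖δ n ^ k‖ := (norm_pow _ _).symm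
      _ = ‖∑ j ∈ Finset.Icc 1 k, a j n * δ n ^ (k - j)‖ := by rw [heq, norm_neg]
      _ ≤ ∑ j ∈ Finset.Icc 1 k, ‖a j n * δ n ^ (k - j)‖ := norm_sum_le _ _
      _ = ∑ j ∈ Finset.Icc 1 k, ‖a j n‖ * ‖δ n‖ ^ (k - j) := by
          simp [norm_mul, norm_pow]
  have hbound : ∑ j ∈ Finset.Icc 1 k, ‖a j n‖ * ‖δ n‖ ^ (k - j)
      ≤ ∑ j ∈ Finset.Icc 1 k, ((j:ℝ)+1) * ε * ‖δ n‖ ^ k := by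
    apply Finset.sum_le_sum
    intro j hj
    obtain ⟨hj1, hjk⟩ := Finset.mem_Icc.mp hj
    calc ‖a j n‖ * ‖δ n‖ ^ (k - j) ≤ (((j:ℝ)+1) * ε * ‖δ n‖ ^ j) * ‖δ n‖ ^ (k-j) := by
          gcongr
          exact haj j hj
      _ = ((j:ℝ)+1) * ε * ‖δ n‖ ^ k := by rw [mul_assoc, ← pow_add, Nat.add_sub_cancel' hjk]
  have hcount : ∑ j ∈ Finset.Icc 1 k, ((j:ℝ)+1) * ε * ‖δ n‖ ^ k ≤ (1/2) * ‖δ n‖ ^ k := by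
    have h1 : ∑ j ∈ Finset.Icc 1 k, ((j:ℝ)+1) ≤ ((k:ℝ)+1)^2 := by
      calc ∑ j ∈ Finset.Icc 1 k, ((j:ℝ)+1) ≤ ∑ _j ∈ Finset.Icc 1 k, ((k:ℝ)+1) := by
            apply Finset.sum_le_sum
            intro j hj
            have := (Finset.mem_Icc.mp hj).2
            have : (j:ℝ) ≤ (k:ℝ) := by exact_mod_cast this
            linarith
        _ = (k:ℝ) * ((k:ℝ)+1) := by
            rw [Finset.sum_const, Nat.card_Icc]; push_cast; ring
        _ ≤ ((k:ℝ)+1)^2 := by nlinarith [Nat.cast_nonneg (α := ℝ) k]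
    calc ∑ j ∈ Finset.Icc 1 k, ((j:ℝ)+1) * ε * ‖δ n‖ ^ k
        = (∑ j ∈ Finset.Icc 1 k, ((j:ℝ)+1)) * ε * ‖δ n‖ ^ k := by
          rw [← Finset.sum_mul, ← Finset.sum_mul]
      _ ≤ ((k:ℝ)+1)^2 * ε * ‖δ n‖^k := by
          gcongr
      _ = (1/2) * ‖δ n‖^k := by
          have hne : ((k:ℝ)+1)^2 ≠ 0 := by positivity
          rw [hεdef]
          field_simp
  have hpow : 0 < ‖δ n‖ ^ k := pow_pos hδpos k
  linarith [hmain.trans (hbound.trans hcount)]
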